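/- (Lemma 3.1, second part: determinant of the Jacobian) Suppose that at a point y ∈ ℝ^n the matrix I_{sn} − h·Ā·F(y) is invertible. Then det(I_{sn} − h·Ā·F(y))·det(Dφ(y)) = det(exp(h·K))·det(I_{sn} − h·(Ā − C'·W̄)·F(y)). -/

import Mathlib

/-!
Differentiating the stage equations, the stage Jacobians `D i = Dk_i(y)` solve the block system
`(1 - h Ā F) D = C' exp(hK)` (using `exp((c_i - 1)hK) exp(hK) = exp(c_i hK)`), and
`Dφ(y) = exp(hK) + h W̄ F D`. With `M = 1 - h Ā F`, `V = h W̄ F` and `E = exp(hK)`, the block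
factorization `[M, -C'; V, 1] * [1, D; 0, E] = [M, 0; V, E + V D]` gives
`det(M + C' V) * det E = det M * det(E + V D)`, which is the claim since
`M + C' V = 1 - h (Ā - C' W̄) F`.
-/

open Matrix

/-- The Jacobian matrix of a map `f : ℝ^ι → ℝ^ι` at a point `y`. -/
noncomputable def jac {ι : Type*} [Fintype ι] [DecidableEq ι]
    (f : (ι → ℝ) → (ι → ℝ)) (y : ι → ℝ) : Matrix ι ι ℝ :=
  LinearMap.toMatrix' ((fderiv ℝ f y).toLinearMap)

namespace Matrix

variable {m n R : Type*} [Fintype m] [DecidableEq m] [Fintype n] [DecidableEq n] [CommRing R]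

theorem det_mul_det_add_mul_of_mul_eq (M : Matrix m m R) (C : Matrix m n R) (V : Matrix n m R)
    (E : Matrix n n R) (G : Matrix m n R) (hMG : M * G = C * E) :
    M.det * (E + V * G).det = E.det * (M + C * V).det := by
  have hprod : fromBlocks M (-C) V 1 * fromBlocks 1 G 0 E = fromBlocks M 0 V (E + V * G) := by
    rw [fromBlocks_multiply, hMG]
    simp [add_comm]
  have := congrArg det hprod
  rw [det_mul, det_fromBlocks_one₂₂, det_fromBlocks_zero₂₁, det_fromBlocks_zero₁₂] at this
  simpa [sub_eq_add_neg, mul_comm] using this.symm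

end Matrix

section Blocks

variable {R σ ι α β : Type*} [NonUnitalNonAssocSemiring R] [Fintype σ] [Fintype ι]

def blockMatrix (X : σ → σ → Matrix ι ι R) : Matrix (σ × ι) (σ × ι) R :=
  of fun p q => X p.1 q.1 p.2 q.2

def blockRow (X : σ → Matrix α ι R) : Matrix α (σ × ι) R :=
  of fun a q => X q.1 a q.2

def blockCol (Y : σ → Matrix ι β R) : Matrix (σ × ι) β R :=
  of fun q b => Y q.1 q.2 b

theorem blockMatrix_mul_blockCol (X : σ → σ → Matrix ι ι R) (Y : σ → Matrix ι β R) :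
    blockMatrix X * blockCol Y = blockCol fun i => ∑ j, X i j * Y j := by
  ext p b
  simp [blockMatrix, blockCol, mul_apply, Fintype.sum_prod_type, Matrix.sum_apply]

theorem blockRow_mul_blockCol (X : σ → Matrix α ι R) (Y : σ → Matrix ι β R) :
    blockRow X * blockCol Y = ∑ j, X j * Y j := by
  ext a b
  simp [blockRow, blockCol, mul_apply, Fintype.sum_prod_type, Matrix.sum_apply]

omit [Fintype σ] [Fintype ι] in
theorem blockCol_mul [Fintype β] (Y : σ → Matrix ι β R) (E : Matrix β β R) :
    blockCol Y * E = blockCol fun i => Y i * E := by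
  ext q b
  simp [blockCol, mul_apply]

variable [DecidableEq σ]

def blockDiagMatrix (J : σ → Matrix ι ι R) : Matrix (σ × ι) (σ × ι) R :=
  blockMatrix fun i j => if i = j then J i else 0

theorem blockDiagMatrix_mul_blockCol (J : σ → Matrix ι ι R) (Y : σ → Matrix ι β R) :
    blockDiagMatrix J * blockCol Y = blockCol fun i => J i * Y i := by
  rw [blockDiagMatrix, blockMatrix_mul_blockCol]
  congr 1
  funext i
  rw [Finset.sum_eq_single i (fun j _ hji => by rw [if_neg hji.symm, Matrix.zero_mul])
    (by simp), if_pos rfl]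

end Blocks

theorem one_sub_smul_blockMatrix_mul_blockDiagMatrix_mul_blockCol {σ ι R : Type*}
    [Fintype σ] [DecidableEq σ] [Fintype ι] [DecidableEq ι] [CommRing R]
    (h : R) (A : σ → σ → Matrix ι ι R) (J D C : σ → Matrix ι ι R) (E : Matrix ι ι R)
    (hD : ∀ i, D i = C i * E + h • ∑ j, A i j * (J j * D j)) :
    (1 - h • (blockMatrix A * blockDiagMatrix J)) * blockCol D = blockCol C * E := by
  rw [Matrix.sub_mul, Matrix.one_mul, Matrix.smul_mul, Matrix.mul_assoc,
    blockDiagMatrix_mul_blockCol, blockMatrix_mul_blockCol, blockCol_mul]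
  ext q b
  simp only [blockCol, of_apply, Matrix.sub_apply, Matrix.smul_apply]
  rw [hD q.1, Matrix.add_apply, Matrix.smul_apply, add_sub_cancel_right]

theorem exp_smul_mul_exp_smul {m 𝕂 : Type*} [Fintype m] [DecidableEq m] [RCLike 𝕂]
    (a b : 𝕂) (K : Matrix m m 𝕂) :
    NormedSpace.exp (a • K) * NormedSpace.exp (b • K) = NormedSpace.exp ((a + b) • K) := by
  rw [add_smul, Matrix.exp_add_of_commute _ _ ((Commute.refl K).smul_left a |>.smul_right b)]

section Jacobian

variable {ι : Type*} [Fintype ι] [DecidableEq ι]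

theorem jac_comp {g k : (ι → ℝ) → (ι → ℝ)} {y : ι → ℝ}
    (hg : DifferentiableAt ℝ g (k y)) (hk : DifferentiableAt ℝ k y) :
    jac (fun z => g (k z)) y = jac g (k y) * jac k y := by
  change jac (g ∘ k) y = _
  rw [jac, jac, jac, fderiv_comp y hg hk,
    ContinuousLinearMap.toLinearMap_comp, LinearMap.toMatrix'_comp]

theorem jac_mulVec_add_smul_sum {σ : Type*} [Fintype σ] (M : Matrix ι ι ℝ) (h : ℝ)
    (A : σ → Matrix ι ι ℝ) {u : σ → (ι → ℝ) → (ι → ℝ)} {y : ι → ℝ}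
    (hu : ∀ j, DifferentiableAt ℝ (u j) y) :
    jac (fun z => M *ᵥ z + h • ∑ j, A j *ᵥ u j z) y = M + h • ∑ j, A j * jac (u j) y := by
  let L : Matrix ι ι ℝ → (ι → ℝ) →L[ℝ] (ι → ℝ) := fun N =>
    LinearMap.toContinuousLinearMap (toLin' N)
  have hder : HasFDerivAt (fun z => M *ᵥ z + h • ∑ j, A j *ᵥ u j z)
      (L M + h • ∑ j, (L (A j)).comp (fderiv ℝ (u j) y)) y :=
    (L M).hasFDerivAt.add ((HasFDerivAt.fun_sum fun j _ =>
      (L (A j)).hasFDerivAt.comp y (hu j).hasFDerivAt).const_smul h)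
  simp [jac, hder.fderiv, L, LinearMap.toMatrix'_comp]

end Jacobian

theorem stmt_1_general (n s : ℕ) (h : ℝ) (K : Matrix (Fin n) (Fin n) ℝ) (c : Fin s → ℝ)
    (g : (Fin n → ℝ) → (Fin n → ℝ)) (hg : Differentiable ℝ g)
    (Abar : Fin s → Fin s → Matrix (Fin n) (Fin n) ℝ)
    (Bbar : Fin s → Matrix (Fin n) (Fin n) ℝ)
    (k : Fin s → (Fin n → ℝ) → (Fin n → ℝ))
    (hk : ∀ i, Differentiable ℝ (k i))
    (hkdef : ∀ i y, k i y =
      (NormedSpace.exp ((c i * h) • K)).mulVec y +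
        h • ∑ j, (Abar i j).mulVec (g (k j y)))
    (φ : (Fin n → ℝ) → (Fin n → ℝ))
    (hφ : ∀ y, φ y =
      (NormedSpace.exp (h • K)).mulVec y + h • ∑ i, (Bbar i).mulVec (g (k i y)))
    -- the big block matrices
    (F : (Fin n → ℝ) → Matrix (Fin s × Fin n) (Fin s × Fin n) ℝ)
    (hF : ∀ y p q, F y p q = if p.1 = q.1 then jac g (k p.1 y) p.2 q.2 else 0)
    (Ablk : Matrix (Fin s × Fin n) (Fin s × Fin n) ℝ)
    (hAblk : ∀ p q, Ablk p q = Abar p.1 q.1 p.2 q.2)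
    (Wbar : Matrix (Fin n) (Fin s × Fin n) ℝ)
    (hWbar : ∀ a q, Wbar a q = Bbar q.1 a q.2)
    (C' : Matrix (Fin s × Fin n) (Fin n) ℝ)
    (hC' : ∀ p b, C' p b = NormedSpace.exp (((c p.1 - 1) * h) • K) p.2 b)
    (y : Fin n → ℝ) :
    ((1 : Matrix (Fin s × Fin n) (Fin s × Fin n) ℝ) - h • (Ablk * F y)).det * (jac φ y).det =
      (NormedSpace.exp (h • K)).det *
        ((1 : Matrix (Fin s × Fin n) (Fin s × Fin n) ℝ) - h • ((Ablk - C' * Wbar) * F y)).det := by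
  set E := NormedSpace.exp (h • K)
  set J : Fin s → Matrix (Fin n) (Fin n) ℝ := fun j => jac g (k j y)
  set D : Fin s → Matrix (Fin n) (Fin n) ℝ := fun i => jac (k i) y
  have hgk : ∀ j, jac (fun z => g (k j z)) y = J j * D j := fun j => jac_comp (hg _) (hk j y)
  have hA : Ablk = blockMatrix Abar := by ext; exact hAblk _ _
  have hFy : F y = blockDiagMatrix J := by
    ext p q
    rw [hF, blockDiagMatrix, blockMatrix, of_apply]
    split_ifs <;> rfl
  have hW : Wbar = blockRow Bbar := by ext; exact hWbar _ _
  have hC : C' = blockCol fun i => NormedSpace.exp (((c i - 1) * h) • K) := by ext; exact hC' _ _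
  have hstage : (1 - h • (Ablk * F y)) * blockCol D = C' * E := by
    rw [hA, hFy, hC]
    refine one_sub_smul_blockMatrix_mul_blockDiagMatrix_mul_blockCol _ _ _ _ _ _ fun i => ?_
    rw [exp_smul_mul_exp_smul, sub_one_mul, sub_add_cancel]
    change jac (k i) y = _
    rw [show k i = _ from funext (hkdef i),
      jac_mulVec_add_smul_sum (u := fun j z => g (k j z)) _ _ _ fun j => (hg _).comp y (hk j y)]
    simp only [hgk]
  have hflow : jac φ y = E + h • (Wbar * F y) * blockCol D := by
    rw [show φ = _ from funext hφ, jac_mulVec_add_smul_sum (u := fun j z => g (k j z)) _ _ _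
        fun j => (hg _).comp y (hk j y),
      smul_mul, Matrix.mul_assoc, hW, hFy, blockDiagMatrix_mul_blockCol, blockRow_mul_blockCol]
    simp only [hgk]
  rw [hflow, det_mul_det_add_mul_of_mul_eq _ _ _ _ _ hstage, sub_mul, smul_sub,
    Matrix.mul_smul, Matrix.mul_assoc]
  congr 2
  abel

/-- **Lemma 3.1, second part.** The determinant of the Jacobian of an exponential
integrator. -/
theorem stmt_1 (n s : ℕ) (h : ℝ) (K : Matrix (Fin n) (Fin n) ℝ) (c : Fin s → ℝ)
    (g : (Fin n → ℝ) → (Fin n → ℝ)) (hg : Differentiable ℝ g)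
    (Abar : Fin s → Fin s → Matrix (Fin n) (Fin n) ℝ)
    (Bbar : Fin s → Matrix (Fin n) (Fin n) ℝ)
    (k : Fin s → (Fin n → ℝ) → (Fin n → ℝ))
    (hk : ∀ i, Differentiable ℝ (k i))
    (hkdef : ∀ i y, k i y =
      (NormedSpace.exp ((c i * h) • K)).mulVec y +
        h • ∑ j, (Abar i j).mulVec (g (k j y)))
    (φ : (Fin n → ℝ) → (Fin n → ℝ))
    (hφ : ∀ y, φ y =
      (NormedSpace.exp (h • K)).mulVec y + h • ∑ i, (Bbar i).mulVec (g (k i y)))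
    -- the big block matrices
    (F : (Fin n → ℝ) → Matrix (Fin s × Fin n) (Fin s × Fin n) ℝ)
    (hF : ∀ y p q, F y p q = if p.1 = q.1 then jac g (k p.1 y) p.2 q.2 else 0)
    (Ablk : Matrix (Fin s × Fin n) (Fin s × Fin n) ℝ)
    (hAblk : ∀ p q, Ablk p q = Abar p.1 q.1 p.2 q.2)
    (Wbar : Matrix (Fin n) (Fin s × Fin n) ℝ)
    (hWbar : ∀ a q, Wbar a q = Bbar q.1 a q.2)
    (C' : Matrix (Fin s × Fin n) (Fin n) ℝ)
    (hC' : ∀ p b, C' p b = NormedSpace.exp (((c p.1 - 1) * h) • K) p.2 b)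
    (y : Fin n → ℝ)
    (hinv : IsUnit ((1 : Matrix (Fin s × Fin n) (Fin s × Fin n) ℝ) - h • (Ablk * F y))) :
    ((1 : Matrix (Fin s × Fin n) (Fin s × Fin n) ℝ) - h • (Ablk * F y)).det * (jac φ y).det =
      (NormedSpace.exp (h • K)).det *
        ((1 : Matrix (Fin s × Fin n) (Fin s × Fin n) ℝ) - h • ((Ablk - C' * Wbar) * F y)).det :=
  stmt_1_general n s h K c g hg Abar Bbar k hk hkdef φ hφ F hF Ablk hAblk Wbar hWbar C' hC' y
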